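/- For every weighted digraph and every k with 0 ≤ k ≤ n−v, the matrix of out forests with k arcs is the following polynomial in the Kirchhoff matrix: Q_k = Σ_{i=0}^{k} σ_{k−i}·(−L)^i. -/

import Mathlib

open Matrix BigOperators Filter

/-- An out forest of the weighted digraph with arc-weight matrix `ε`:
a set of arcs (pairs with positive weight), every vertex has at most one
incoming arc, and there is no directed cycle. -/
def IsOutForest {n : ℕ} (ε : Fin n → Fin n → ℝ) (F : Finset (Fin n × Fin n)) : Prop :=
  (∀ p ∈ F, 0 < ε p.1 p.2) ∧
  (∀ u u' v : Fin n, (u, v) ∈ F → (u', v) ∈ F → u = u') ∧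
  ¬ ∃ (k : ℕ) (f : ℕ → Fin n), 0 < k ∧ f 0 = f k ∧ ∀ i < k, (f i, f (i + 1)) ∈ F

/-- The weight of a forest: the product of the weights of its arcs. -/
noncomputable def forestWeight {n : ℕ} (ε : Fin n → Fin n → ℝ)
    (F : Finset (Fin n × Fin n)) : ℝ :=
  ∏ p ∈ F, ε p.1 p.2

/-- `σ_k`: the total weight of the out forests with exactly `k` arcs. -/
noncomputable def sigmaW {n : ℕ} (ε : Fin n → Fin n → ℝ) (k : ℕ) : ℝ :=
  ∑ᶠ F ∈ {F : Finset (Fin n × Fin n) | IsOutForest ε F ∧ F.card = k}, forestWeight ε F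

/-- `Q_k`: the matrix whose `(i,j)` entry is the total weight of out forests with `k`
arcs in which `j` has no incoming arc and `i` is reachable from `j` along arcs of `F`. -/
noncomputable def QMat {n : ℕ} (ε : Fin n → Fin n → ℝ) (k : ℕ) :
    Matrix (Fin n) (Fin n) ℝ :=
  Matrix.of fun i j =>
    ∑ᶠ F ∈ {F : Finset (Fin n × Fin n) | IsOutForest ε F ∧ F.card = k ∧
        (∀ u, (u, j) ∉ F) ∧ Relation.ReflTransGen (fun a b => (a, b) ∈ F) j i},
      forestWeight ε F

/-- `n − v`: the maximum number of arcs in an out forest. -/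
noncomputable def maxForestCard {n : ℕ} (ε : Fin n → Fin n → ℝ) : ℕ :=
  sSup {k | ∃ F : Finset (Fin n × Fin n), IsOutForest ε F ∧ F.card = k}

/-- The Kirchhoff matrix: `l i j = -ε j i` for `j ≠ i`, `l i i = Σ_{k ≠ i} ε k i`. -/
noncomputable def kirchhoff {n : ℕ} (ε : Fin n → Fin n → ℝ) : Matrix (Fin n) (Fin n) ℝ :=
  Matrix.of fun i j =>
    if i = j then ∑ k ∈ Finset.univ.filter (· ≠ i), ε k i else -(ε j i)

/-- The normalized matrix of maximum out forests `J̄ = σ_{n−v}⁻¹ Q_{n−v}`. -/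
noncomputable def Jbar {n : ℕ} (ε : Fin n → Fin n → ℝ) : Matrix (Fin n) (Fin n) ℝ :=
  (sigmaW ε (maxForestCard ε))⁻¹ • QMat ε (maxForestCard ε)


namespace ForestAux

variable {n : ℕ}

abbrev Arcs (n : ℕ) := Finset (Fin n × Fin n)

def Reach (F : Arcs n) : Fin n → Fin n → Prop :=
  Relation.ReflTransGen fun a b => (a, b) ∈ F

def Func (F : Arcs n) : Prop := ∀ u u' v : Fin n, (u,v) ∈ F → (u',v) ∈ F → u = u'
def NoCyc (F : Arcs n) : Prop := ∀ a b : Fin n, (a,b) ∈ F → ¬ Reach F b a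
def IsRoot (F : Arcs n) (v : Fin n) : Prop := ∀ u, (u,v) ∉ F

theorem reach_mono {F G : Arcs n} (h : F ⊆ G) {x y : Fin n} (hr : Reach F x y) :
    Reach G x y := Relation.ReflTransGen.mono (fun a b hab => h hab) x y hr

theorem reach_refl (F : Arcs n) (x : Fin n) : Reach F x x := Relation.ReflTransGen.refl

/-- Extract a finite chain from `ReflTransGen`. -/
theorem exists_chain {α : Type*} {r : α → α → Prop} {x y : α}
    (h : Relation.ReflTransGen r x y) :
    ∃ (m : ℕ) (g : ℕ → α), g 0 = x ∧ g m = y ∧ ∀ i < m, r (g i) (g (i+1)) := by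
  induction h with
  | refl => exact ⟨0, fun _ => x, rfl, rfl, fun i hi => absurd hi (Nat.not_lt_zero i)⟩
  | @tail b c hab hbc ih =>
    obtain ⟨m, g, hg0, hgm, hstep⟩ := ih
    refine ⟨m+1, fun i => if i = m+1 then c else g i, by simp [hg0], by simp, ?_⟩
    intro i hi
    have hi' : i ≠ m + 1 := Nat.ne_of_lt hi
    rcases Nat.lt_or_ge i m with h1 | h2
    · have : i + 1 ≠ m + 1 := by omega
      simpa [hi', this, show i ≠ m by omega] using hstep i h1
    · have him : i = m := by omega
      subst him
      simpa [hi', hgm] using hbc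

theorem noCyc_of_no_cycle {F : Arcs n}
    (h : ¬ ∃ (k : ℕ) (f : ℕ → Fin n), 0 < k ∧ f 0 = f k ∧ ∀ i < k, (f i, f (i + 1)) ∈ F) :
    NoCyc F := by
  intro a b hab hr
  obtain ⟨m, g, hg0, hgm, hstep⟩ := exists_chain hr
  refine h ⟨m+1, fun i => if i = 0 then a else g (i-1), by omega, by simp [hgm], ?_⟩
  intro i hi
  rcases Nat.eq_zero_or_pos i with h0 | h0
  · subst h0; simpa [hg0] using hab
  · have h1 : i ≠ 0 := by omega
    have h2 : i + 1 ≠ 0 := by omega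
    have : i - 1 < m := by omega
    have := hstep (i-1) this
    have heq : i - 1 + 1 = i := by omega
    simpa [h1, h2, heq] using this

theorem no_cycle_of_noCyc {F : Arcs n} (h : NoCyc F) :
    ¬ ∃ (k : ℕ) (f : ℕ → Fin n), 0 < k ∧ f 0 = f k ∧ ∀ i < k, (f i, f (i + 1)) ∈ F := by
  rintro ⟨k, f, hk, hfk, hstep⟩
  have harc : (f 0, f 1) ∈ F := hstep 0 hk
  have hreach : ∀ i ≤ k, 1 ≤ i → Reach F (f 1) (f i) := by
    intro i hik h1i
    induction i with
    | zero => omega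
    | succ m ih =>
      rcases Nat.lt_or_ge m 1 with hm | hm
      · have : m = 0 := by omega
        subst this; exact reach_refl F (f 1)
      · exact (ih (by omega) hm).tail (hstep m (by omega))
  have := hreach k (le_refl k) hk
  rw [hfk] at harc
  exact h _ _ harc (hfk ▸ this)

def Forest (ε : Fin n → Fin n → ℝ) (F : Arcs n) : Prop :=
  (∀ p ∈ F, 0 < ε p.1 p.2) ∧ Func F ∧ NoCyc F

theorem isOutForest_iff {ε : Fin n → Fin n → ℝ} {F : Arcs n} :
    IsOutForest ε F ↔ Forest ε F := by
  constructor
  · rintro ⟨h1, h2, h3⟩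
    exact ⟨h1, h2, noCyc_of_no_cycle h3⟩
  · rintro ⟨h1, h2, h3⟩
    exact ⟨h1, h2, no_cycle_of_noCyc h3⟩

theorem forest_subset {ε : Fin n → Fin n → ℝ} {F G : Arcs n} (hF : Forest ε F)
    (h : G ⊆ F) : Forest ε G := by
  obtain ⟨h1, h2, h3⟩ := hF
  refine ⟨fun p hp => h1 p (h hp), fun u u' v hu hu' => h2 u u' v (h hu) (h hu'), ?_⟩
  intro a b hab hr
  exact h3 a b (h hab) (reach_mono h hr)

theorem exists_in_arc {F : Arcs n} {i j : Fin n} (hr : Reach F j i) (hij : i ≠ j) :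
    ∃ m, (m, i) ∈ F ∧ Reach F j m := by
  rcases Relation.ReflTransGen.cases_tail hr with h | ⟨c, hc, harc⟩
  · exact absurd h hij
  · exact ⟨c, harc, hc⟩

/-- In a forest, ancestors of a vertex form a chain topped by the root. -/
theorem reach_of_reach_of_root {F : Arcs n} (hfunc : Func F) {i j m : Fin n}
    (hroot : IsRoot F j) (him : Reach F i m) (hjm : Reach F j m) : Reach F j i := by
  induction him with
  | refl => exact hjm
  | @tail b c hib hbc ih =>
    rcases Relation.ReflTransGen.cases_tail hjm with h | ⟨d, hd, harc⟩
    · subst h; exact absurd hbc (hroot b)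
    · have : d = b := hfunc d b c harc hbc
      subst this; exact ih hd

/-- Deleting an arc `(s,i)` preserves reachability to targets not reachable from `i`. -/
theorem reach_erase {F : Arcs n} {j m s i : Fin n} (hjm : Reach F j m)
    (hnim : ¬ Reach F i m) : Reach (F.erase (s,i)) j m := by
  induction hjm with
  | refl => exact reach_refl _ _
  | @tail b c hjb hbc ih =>
    have hnib : ¬ Reach F i b := fun h => hnim (h.tail hbc)
    have hci : c ≠ i := by
      rintro rfl; exact hnim (reach_refl F c)
    have harc : (b, c) ∈ F.erase (s, i) := by
      apply Finset.mem_erase.2 ⟨by simp [hci], hbc⟩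
    exact (ih hnib).tail harc

theorem reach_insert_iff {F : Arcs n} {t i : Fin n} (hroot : IsRoot F i)
    (hnit : ¬ Reach F i t) (x y : Fin n) :
    Reach (insert (t,i) F) x y ↔ Reach F x y ∨ (Reach F x t ∧ Reach F i y) := by
  constructor
  · intro h
    induction h with
    | refl => exact Or.inl (reach_refl _ _)
    | @tail b c hxb hbc ih =>
      rcases Finset.mem_insert.1 hbc with heq | hbc'
      · simp only [Prod.mk.injEq] at heq
        obtain ⟨rfl, rfl⟩ := heq
        rcases ih with h' | ⟨h1, h2⟩
        · exact Or.inr ⟨h', reach_refl _ _⟩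
        · exact absurd h2 hnit
      · rcases ih with h' | ⟨h1, h2⟩
        · exact Or.inl (h'.tail hbc')
        · exact Or.inr ⟨h1, h2.tail hbc'⟩
  · rintro (h | ⟨h1, h2⟩)
    · exact reach_mono (Finset.subset_insert _ _) h
    · exact Relation.ReflTransGen.trans
        ((reach_mono (Finset.subset_insert _ _) h1).tail (Finset.mem_insert_self _ _))
        (reach_mono (Finset.subset_insert _ _) h2)

theorem forest_insert {ε : Fin n → Fin n → ℝ} {F : Arcs n} {t i : Fin n}
    (hF : Forest ε F) (hroot : IsRoot F i) (hnit : ¬ Reach F i t) (hpos : 0 < ε t i) :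
    Forest ε (insert (t,i) F) := by
  obtain ⟨h1, h2, h3⟩ := hF
  refine ⟨?_, ?_, ?_⟩
  · intro p hp
    rcases Finset.mem_insert.1 hp with h | h
    · subst h; exact hpos
    · exact h1 p h
  · intro u u' v hu hu'
    rcases Finset.mem_insert.1 hu with h | h <;> rcases Finset.mem_insert.1 hu' with h' | h'
    · simp only [Prod.mk.injEq] at h h'
      rw [h.1, h'.1]
    · simp only [Prod.mk.injEq] at h
      exact absurd (show (u', i) ∈ F from h.2 ▸ h') (hroot u')
    · simp only [Prod.mk.injEq] at h'
      exact absurd (show (u, i) ∈ F from h'.2 ▸ h) (hroot u)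
    · exact h2 u u' v h h'
  · intro a b hab hr
    rcases (reach_insert_iff hroot hnit b a).1 hr with h | ⟨hb, ha⟩
    · rcases Finset.mem_insert.1 hab with heq | hab'
      · simp only [Prod.mk.injEq] at heq
        obtain ⟨rfl, rfl⟩ := heq
        exact hnit h
      · exact h3 a b hab' h
    · rcases Finset.mem_insert.1 hab with heq | hab'
      · simp only [Prod.mk.injEq] at heq
        obtain ⟨rfl, rfl⟩ := heq
        exact hnit hb
      · exact hnit (Relation.ReflTransGen.trans (ha.tail hab') hb)

noncomputable def src (F : Arcs n) (v : Fin n) : Fin n :=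
  if h : ∃ u, (u, v) ∈ F then h.choose else v

theorem src_mem {F : Arcs n} {v : Fin n} (h : ∃ u, (u, v) ∈ F) : (src F v, v) ∈ F := by
  rw [src, dif_pos h]; exact h.choose_spec

theorem src_eq {F : Arcs n} (hfunc : Func F) {u v : Fin n} (h : (u, v) ∈ F) :
    src F v = u := hfunc _ _ _ (src_mem ⟨u, h⟩) h

theorem isRoot_erase {ε : Fin n → Fin n → ℝ} {F : Arcs n} (hF : Forest ε F) {s i : Fin n}
    (hsi : (s, i) ∈ F) : IsRoot (F.erase (s, i)) i := by
  intro u hu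
  have hu' := Finset.mem_of_mem_erase hu
  have : u = s := hF.2.1 u s i hu' hsi
  subst this
  exact (Finset.mem_erase.1 hu).1 rfl

theorem swap_spec {ε : Fin n → Fin n → ℝ} {F : Arcs n} {s i t j : Fin n}
    (hF : Forest ε F) (hrootj : IsRoot F j) (hij : i ≠ j)
    (hsi : (s, i) ∈ F) (hnit : ¬ Reach F i t) (hpos : 0 < ε t i) :
    Forest ε (insert (t,i) (F.erase (s,i))) ∧
    (insert (t,i) (F.erase (s,i))).card = F.card ∧
    IsRoot (insert (t,i) (F.erase (s,i))) j ∧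
    ¬ Reach (insert (t,i) (F.erase (s,i))) i s ∧
    src (insert (t,i) (F.erase (s,i))) i = t ∧
    insert (s,i) ((insert (t,i) (F.erase (s,i))).erase (t,i)) = F ∧
    ε s i * forestWeight ε (insert (t,i) (F.erase (s,i))) = ε t i * forestWeight ε F ∧
    (∀ y, Reach F j y → ¬ Reach F i y → Reach (insert (t,i) (F.erase (s,i))) j y) := by
  have hsub : F.erase (s,i) ⊆ F := Finset.erase_subset _ _
  have hF1 : Forest ε (F.erase (s,i)) := forest_subset hF hsub
  have hrooti1 : IsRoot (F.erase (s,i)) i := isRoot_erase hF hsi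
  have hnit1 : ¬ Reach (F.erase (s,i)) i t := fun h => hnit (reach_mono hsub h)
  have hF2 : Forest ε (insert (t,i) (F.erase (s,i))) := forest_insert hF1 hrooti1 hnit1 hpos
  have hti : (t,i) ∉ F.erase (s,i) := by
    intro h
    have h' := Finset.mem_of_mem_erase h
    have : t = s := hF.2.1 t s i h' hsi
    subst this
    exact (Finset.mem_erase.1 h).1 rfl
  have hcard1 : 1 ≤ F.card := Finset.card_pos.2 ⟨_, hsi⟩
  refine ⟨hF2, ?_, ?_, ?_, ?_, ?_, ?_, ?_⟩
  · rw [Finset.card_insert_of_notMem hti, Finset.card_erase_of_mem hsi]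
    omega
  · intro u hu
    rcases Finset.mem_insert.1 hu with h | h
    · simp only [Prod.mk.injEq] at h
      exact hij h.2.symm
    · exact hrootj u (hsub h)
  · intro h
    rcases (reach_insert_iff hrooti1 hnit1 i s).1 h with h' | ⟨h1, _⟩
    · exact hF.2.2 s i hsi (reach_mono hsub h')
    · exact hnit1 h1
  · exact src_eq hF2.2.1 (Finset.mem_insert_self _ _)
  · rw [Finset.erase_insert hti, Finset.insert_erase hsi]
  · rw [forestWeight, Finset.prod_insert hti]
    have := Finset.mul_prod_erase F (fun p => ε p.1 p.2) hsi
    rw [forestWeight, ← this]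
    ring
  · intro y hjy hniy
    exact reach_mono (Finset.subset_insert _ _) (reach_erase hjy hniy)

open scoped Classical

theorem finsum_setOf {α : Type*} [Fintype α] (P : α → Prop) (f : α → ℝ) :
    ∑ᶠ x ∈ {x | P x}, f x = ∑ x ∈ Finset.univ.filter P, f x := by
  rw [← finsum_mem_coe_finset]
  congr 1
  ext x
  simp

/-- Sum of forest weights over a predicate. -/
noncomputable def SW (ε : Fin n → Fin n → ℝ) (P : Arcs n → Prop) : ℝ :=
  ∑ F ∈ Finset.univ.filter P, forestWeight ε F

/-- Sum of arc-weighted forest weights over a predicate on pairs. -/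
noncomputable def SWp (ε : Fin n → Fin n → ℝ) (i : Fin n) (P : Fin n × Arcs n → Prop) : ℝ :=
  ∑ p ∈ Finset.univ.filter P, ε p.1 i * forestWeight ε p.2

theorem sum_filter_eq_sum_filter {α : Type*} {s t : Finset α} (f : α → ℝ)
    (h : ∀ x, x ∈ s ↔ x ∈ t) : ∑ x ∈ s, f x = ∑ x ∈ t, f x :=
  Finset.sum_congr (Finset.ext h) fun _ _ => rfl

theorem SW_congr (ε : Fin n → Fin n → ℝ) {P Q : Arcs n → Prop} (h : ∀ F, P F ↔ Q F) :
    SW ε P = SW ε Q := by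
  unfold SW
  exact sum_filter_eq_sum_filter _ fun F => by
    simp only [Finset.mem_filter, Finset.mem_univ, true_and]
    exact h F

theorem SWp_congr (ε : Fin n → Fin n → ℝ) (i : Fin n) {P Q : Fin n × Arcs n → Prop}
    (h : ∀ p, P p ↔ Q p) : SWp ε i P = SWp ε i Q := by
  unfold SWp
  exact sum_filter_eq_sum_filter _ fun p => by
    simp only [Finset.mem_filter, Finset.mem_univ, true_and]
    exact h p

theorem SW_partition (ε : Fin n → Fin n → ℝ) (A C : Arcs n → Prop) :
    SW ε (fun F => A F ∧ C F) + SW ε (fun F => A F ∧ ¬ C F) = SW ε A := by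
  have h := Finset.sum_filter_add_sum_filter_not (Finset.univ.filter A) C (forestWeight ε)
  have e1 : SW ε (fun F => A F ∧ C F)
      = ∑ x ∈ (Finset.univ.filter A).filter (fun x => C x), forestWeight ε x := by
    unfold SW
    exact sum_filter_eq_sum_filter _ fun x => by
      simp only [Finset.mem_filter, Finset.mem_univ, true_and]
  have e2 : SW ε (fun F => A F ∧ ¬ C F)
      = ∑ x ∈ (Finset.univ.filter A).filter (fun x => ¬ C x), forestWeight ε x := by
    unfold SW
    exact sum_filter_eq_sum_filter _ fun x => by
      simp only [Finset.mem_filter, Finset.mem_univ, true_and]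
  rw [e1, e2]
  exact h

theorem SWp_partition (ε : Fin n → Fin n → ℝ) (i : Fin n) (A C : Fin n × Arcs n → Prop) :
    SWp ε i (fun p => A p ∧ C p) + SWp ε i (fun p => A p ∧ ¬ C p) = SWp ε i A := by
  have h := Finset.sum_filter_add_sum_filter_not (Finset.univ.filter A) C
    (fun p => ε p.1 i * forestWeight ε p.2)
  have e1 : SWp ε i (fun p => A p ∧ C p)
      = ∑ x ∈ (Finset.univ.filter A).filter (fun x => C x), ε x.1 i * forestWeight ε x.2 := by
    unfold SWp
    exact sum_filter_eq_sum_filter _ fun x => by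
      simp only [Finset.mem_filter, Finset.mem_univ, true_and]
  have e2 : SWp ε i (fun p => A p ∧ ¬ C p)
      = ∑ x ∈ (Finset.univ.filter A).filter (fun x => ¬ C x), ε x.1 i * forestWeight ε x.2 := by
    unfold SWp
    exact sum_filter_eq_sum_filter _ fun x => by
      simp only [Finset.mem_filter, Finset.mem_univ, true_and]
  rw [e1, e2]
  exact h

theorem QMat_apply (ε : Fin n → Fin n → ℝ) (k : ℕ) (i j : Fin n) :
    QMat ε k i j
      = SW ε (fun F => Forest ε F ∧ F.card = k ∧ IsRoot F j ∧ Reach F j i) := by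
  show (∑ᶠ F ∈ {F : Arcs n | IsOutForest ε F ∧ F.card = k ∧
      (∀ u, (u, j) ∉ F) ∧ Relation.ReflTransGen (fun a b => (a, b) ∈ F) j i},
      forestWeight ε F) = _
  rw [show {F : Arcs n | IsOutForest ε F ∧ F.card = k ∧
      (∀ u, (u, j) ∉ F) ∧ Relation.ReflTransGen (fun a b => (a, b) ∈ F) j i}
      = {F : Arcs n | Forest ε F ∧ F.card = k ∧ IsRoot F j ∧ Reach F j i} from by
    ext F; simp only [Set.mem_setOf_eq, isOutForest_iff]; rfl]
  exact finsum_setOf (fun F : Arcs n => Forest ε F ∧ F.card = k ∧ IsRoot F j ∧ Reach F j i)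
    (forestWeight ε)

theorem sigmaW_eq (ε : Fin n → Fin n → ℝ) (k : ℕ) :
    sigmaW ε k = SW ε (fun F => Forest ε F ∧ F.card = k) := by
  show (∑ᶠ F ∈ {F : Arcs n | IsOutForest ε F ∧ F.card = k}, forestWeight ε F) = _
  rw [show {F : Arcs n | IsOutForest ε F ∧ F.card = k}
      = {F : Arcs n | Forest ε F ∧ F.card = k} from by
    ext F; simp only [Set.mem_setOf_eq, isOutForest_iff]]
  exact finsum_setOf (fun F : Arcs n => Forest ε F ∧ F.card = k) (forestWeight ε)

theorem pair_sum {α β : Type*} [Fintype α] [Fintype β] (P : α → Prop) (Q : α → β → Prop)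
    [DecidablePred P] [∀ a, DecidablePred (Q a)]
    [DecidablePred (fun p : α × β => P p.1 ∧ Q p.1 p.2)]
    (f : α → β → ℝ) :
    ∑ p ∈ Finset.univ.filter (fun p : α × β => P p.1 ∧ Q p.1 p.2), f p.1 p.2
      = ∑ m ∈ Finset.univ.filter P, ∑ F ∈ Finset.univ.filter (Q m), f m F := by
  rw [Finset.sum_filter, ← Finset.univ_product_univ, Finset.sum_product]
  rw [Finset.sum_congr rfl (fun m _ => Finset.sum_filter (Q m) (f m)), Finset.sum_filter]
  refine Finset.sum_congr rfl fun m _ => ?_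
  by_cases hm : P m
  · simp [hm]
  · simp [hm]

theorem pos_trick (ε : Fin n → Fin n → ℝ) (hnonneg : ∀ a b, 0 ≤ ε a b)
    (hdiag : ∀ v, ε v v = 0) (i : Fin n) (S : Fin n → ℝ) :
    ∑ t ∈ Finset.univ.filter (· ≠ i), ε t i * S t
      = ∑ t ∈ Finset.univ.filter (fun t => 0 < ε t i), ε t i * S t := by
  rw [Finset.sum_filter_of_ne, Finset.sum_filter_of_ne]
  · intro t _ h
    rcases lt_or_eq_of_le (hnonneg t i) with h' | h'
    · exact h'
    · exact absurd (by rw [← h']; ring) h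
  · intro t _ h hti
    subst hti
    exact h (by rw [hdiag]; ring)

theorem col_collect (ε : Fin n → Fin n → ℝ) (hnonneg : ∀ a b, 0 ≤ ε a b)
    (hdiag : ∀ v, ε v v = 0) (i : Fin n) (Q : Fin n → Arcs n → Prop) :
    ∑ t ∈ Finset.univ.filter (· ≠ i), ε t i * SW ε (Q t)
      = SWp ε i (fun p => 0 < ε p.1 i ∧ Q p.1 p.2) := by
  unfold SW SWp
  rw [pos_trick ε hnonneg hdiag i (fun t => ∑ F ∈ Finset.univ.filter (Q t), forestWeight ε F)]
  have h := (pair_sum (fun t => 0 < ε t i) Q (fun t F => ε t i * forestWeight ε F)).symm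
  refine Eq.trans (Finset.sum_congr rfl fun t _ => Finset.mul_sum _ _ _) (h.trans ?_)
  exact sum_filter_eq_sum_filter _ fun p => by simp only [Finset.mem_filter]
theorem sumA_raw (ε : Fin n → Fin n → ℝ) (k : ℕ) (i j : Fin n) (hij : i ≠ j) :
    ∑ F ∈ Finset.univ.filter (fun F : Arcs n =>
        Forest ε F ∧ F.card = k + 1 ∧ IsRoot F j ∧ Reach F j i), forestWeight ε F
    = ∑ p ∈ Finset.univ.filter (fun p : Fin n × Arcs n =>
        0 < ε p.1 i ∧ Forest ε p.2 ∧ p.2.card = k ∧ IsRoot p.2 j ∧ Reach p.2 j p.1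
          ∧ IsRoot p.2 i ∧ ¬ Reach p.2 i p.1),
        ε p.1 i * forestWeight ε p.2 := by
  refine Finset.sum_nbij' (fun F => (src F i, F.erase (src F i, i)))
    (fun p => insert (p.1, i) p.2) ?_ ?_ ?_ ?_ ?_
  · intro F hF
    obtain ⟨-, hFor, hcard, hrootj, hreach⟩ := Finset.mem_filter.1 hF
    obtain ⟨m, hm, hjm⟩ := exists_in_arc hreach hij
    have hseq : src F i = m := src_eq hFor.2.1 hm
    have hsF : (src F i, i) ∈ F := hseq ▸ hm
    have hjs : Reach F j (src F i) := hseq ▸ hjm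
    have hnis : ¬ Reach F i (src F i) := hFor.2.2 _ _ hsF
    refine Finset.mem_filter.2 ⟨Finset.mem_univ _, hFor.1 _ hsF,
      forest_subset hFor (Finset.erase_subset _ _), ?_, ?_, ?_, ?_, ?_⟩
    · rw [Finset.card_erase_of_mem hsF, hcard]
      omega
    · exact fun u hu => hrootj u (Finset.mem_of_mem_erase hu)
    · exact reach_erase hjs hnis
    · exact isRoot_erase hFor hsF
    · exact fun h => hnis (reach_mono (Finset.erase_subset _ _) h)
  · intro p hp
    obtain ⟨-, hpos, hFor, hcard, hrootj, hjm, hrooti, hnim⟩ := Finset.mem_filter.1 hp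
    refine Finset.mem_filter.2 ⟨Finset.mem_univ _,
      forest_insert hFor hrooti hnim hpos, ?_, ?_, ?_⟩
    · rw [Finset.card_insert_of_notMem (hrooti p.1), hcard]
    · intro u hu
      rcases Finset.mem_insert.1 hu with h | h
      · simp only [Prod.mk.injEq] at h
        exact hij h.2.symm
      · exact hrootj u h
    · exact (reach_mono (Finset.subset_insert _ _) hjm).tail (Finset.mem_insert_self _ _)
  · intro F hF
    obtain ⟨-, hFor, hcard, hrootj, hreach⟩ := Finset.mem_filter.1 hF
    obtain ⟨m, hm, hjm⟩ := exists_in_arc hreach hij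
    have hsF : (src F i, i) ∈ F := (src_eq hFor.2.1 hm) ▸ hm
    exact Finset.insert_erase hsF
  · intro p hp
    obtain ⟨-, hpos, hFor, hcard, hrootj, hjm, hrooti, hnim⟩ := Finset.mem_filter.1 hp
    have hG : Forest ε (insert (p.1, i) p.2) := forest_insert hFor hrooti hnim hpos
    have h1 : src (insert (p.1, i) p.2) i = p.1 := src_eq hG.2.1 (Finset.mem_insert_self _ _)
    simp only [h1, Finset.erase_insert (hrooti p.1)]
  · intro F hF
    obtain ⟨-, hFor, hcard, hrootj, hreach⟩ := Finset.mem_filter.1 hF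
    obtain ⟨m, hm, hjm⟩ := exists_in_arc hreach hij
    have hsF : (src F i, i) ∈ F := (src_eq hFor.2.1 hm) ▸ hm
    exact (Finset.mul_prod_erase F (fun p => ε p.1 p.2) hsF).symm

theorem sumC_raw (ε : Fin n → Fin n → ℝ) (k : ℕ) (j : Fin n) :
    ∑ F ∈ Finset.univ.filter (fun F : Arcs n =>
        Forest ε F ∧ F.card = k + 1 ∧ ¬ IsRoot F j), forestWeight ε F
    = ∑ p ∈ Finset.univ.filter (fun p : Fin n × Arcs n =>
        0 < ε p.1 j ∧ Forest ε p.2 ∧ p.2.card = k ∧ IsRoot p.2 j ∧ ¬ Reach p.2 j p.1),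
        ε p.1 j * forestWeight ε p.2 := by
  refine Finset.sum_nbij' (fun F => (src F j, F.erase (src F j, j)))
    (fun p => insert (p.1, j) p.2) ?_ ?_ ?_ ?_ ?_
  · intro F hF
    obtain ⟨-, hFor, hcard, hnroot⟩ := Finset.mem_filter.1 hF
    have hex : ∃ u, (u, j) ∈ F := by
      simpa only [IsRoot, not_forall, not_not] using hnroot
    have hsF : (src F j, j) ∈ F := src_mem hex
    refine Finset.mem_filter.2 ⟨Finset.mem_univ _, hFor.1 _ hsF,
      forest_subset hFor (Finset.erase_subset _ _), ?_, isRoot_erase hFor hsF, ?_⟩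
    · rw [Finset.card_erase_of_mem hsF, hcard]
      omega
    · exact fun h => hFor.2.2 _ _ hsF (reach_mono (Finset.erase_subset _ _) h)
  · intro p hp
    obtain ⟨-, hpos, hFor, hcard, hrootj, hnjm⟩ := Finset.mem_filter.1 hp
    refine Finset.mem_filter.2 ⟨Finset.mem_univ _,
      forest_insert hFor hrootj hnjm hpos, ?_, ?_⟩
    · rw [Finset.card_insert_of_notMem (hrootj p.1), hcard]
    · exact fun h => h p.1 (Finset.mem_insert_self _ _)
  · intro F hF
    obtain ⟨-, hFor, hcard, hnroot⟩ := Finset.mem_filter.1 hF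
    have hex : ∃ u, (u, j) ∈ F := by
      simpa only [IsRoot, not_forall, not_not] using hnroot
    exact Finset.insert_erase (src_mem hex)
  · intro p hp
    obtain ⟨-, hpos, hFor, hcard, hrootj, hnjm⟩ := Finset.mem_filter.1 hp
    have hG : Forest ε (insert (p.1, j) p.2) := forest_insert hFor hrootj hnjm hpos
    have h1 : src (insert (p.1, j) p.2) j = p.1 := src_eq hG.2.1 (Finset.mem_insert_self _ _)
    simp only [h1, Finset.erase_insert (hrootj p.1)]
  · intro F hF
    obtain ⟨-, hFor, hcard, hnroot⟩ := Finset.mem_filter.1 hF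
    have hex : ∃ u, (u, j) ∈ F := by
      simpa only [IsRoot, not_forall, not_not] using hnroot
    exact (Finset.mul_prod_erase F (fun p => ε p.1 p.2) (src_mem hex)).symm

noncomputable def swapMap (i : Fin n) : Fin n × Arcs n → Fin n × Arcs n :=
  fun p => if Reach p.2 i p.1 then p
    else (src p.2 i, insert (p.1, i) (p.2.erase (src p.2 i, i)))

theorem swapMap_spec (ε : Fin n → Fin n → ℝ) {t i j : Fin n} {F : Arcs n}
    (hpos : 0 < ε t i) (hF : Forest ε F) (hrootj : IsRoot F j) (hij : i ≠ j)
    (hex : ∃ u, (u, i) ∈ F) (hnit : ¬ Reach F i t) :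
    ∃ s G, swapMap i (t, F) = (s, G) ∧ 0 < ε s i ∧ Forest ε G ∧ G.card = F.card ∧
      IsRoot G j ∧ (t, i) ∈ G ∧ swapMap i (s, G) = (t, F) ∧
      ε s i * forestWeight ε G = ε t i * forestWeight ε F ∧
      (∀ y, Reach F j y → ¬ Reach F i y → Reach G j y) := by
  have hsF : (src F i, i) ∈ F := src_mem hex
  obtain ⟨hG, hcard, hrootG, hnis, hsrcG, hins, hw, htr⟩ :=
    swap_spec hF hrootj hij hsF hnit hpos
  refine ⟨src F i, insert (t,i) (F.erase (src F i, i)), ?_, hF.1 _ hsF, hG, hcard, hrootG,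
    Finset.mem_insert_self _ _, ?_, hw, htr⟩
  · rw [swapMap]
    simp only [if_neg hnit]
  · rw [swapMap]
    simp only [if_neg hnis, hsrcG, hins]

theorem sumB_raw (ε : Fin n → Fin n → ℝ) (k : ℕ) (i j : Fin n) (hij : i ≠ j) :
    ∑ p ∈ Finset.univ.filter (fun p : Fin n × Arcs n =>
        0 < ε p.1 i ∧ Forest ε p.2 ∧ p.2.card = k ∧ IsRoot p.2 j ∧ Reach p.2 j i),
        ε p.1 i * forestWeight ε p.2
    = ∑ p ∈ Finset.univ.filter (fun p : Fin n × Arcs n =>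
        0 < ε p.1 i ∧ Forest ε p.2 ∧ p.2.card = k ∧ IsRoot p.2 j ∧ Reach p.2 j p.1
          ∧ ¬ (IsRoot p.2 i ∧ ¬ Reach p.2 i p.1)),
        ε p.1 i * forestWeight ε p.2 := by
  refine Finset.sum_nbij' (swapMap i) (swapMap i) ?_ ?_ ?_ ?_ ?_
  · rintro ⟨t, F⟩ hp
    obtain ⟨-, hpos, hF, hcard, hrootj, hji⟩ := Finset.mem_filter.1 hp
    by_cases hr : Reach F i t
    · rw [swapMap]
      simp only [if_pos hr]
      exact Finset.mem_filter.2 ⟨Finset.mem_univ _, hpos, hF, hcard, hrootj,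
        hji.trans hr, fun h => h.2 hr⟩
    · obtain ⟨m, hm, hjm⟩ := exists_in_arc hji hij
      obtain ⟨s, G, heq, hposs, hG, hcardG, hrootG, htiG, hback, hw, htr⟩ :=
        swapMap_spec ε hpos hF hrootj hij ⟨m, hm⟩ hr
      rw [heq]
      have hseq : src F i = m := src_eq hF.2.1 hm
      have hjs : Reach F j s := by
        have : s = src F i := by
          rw [swapMap] at heq
          simp only [if_neg hr, Prod.mk.injEq] at heq
          exact heq.1.symm
        rw [this, hseq]; exact hjm
      have hnis : ¬ Reach F i s := by
        have : s = src F i := by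
          rw [swapMap] at heq
          simp only [if_neg hr, Prod.mk.injEq] at heq
          exact heq.1.symm
        rw [this]; exact hF.2.2 _ _ (src_mem ⟨m, hm⟩)
      refine Finset.mem_filter.2 ⟨Finset.mem_univ _, hposs, hG, hcardG ▸ hcard, hrootG,
        htr s hjs hnis, fun h => h.1 t htiG⟩
  · rintro ⟨m, G⟩ hp
    obtain ⟨-, hpos, hG, hcard, hrootj, hjm, hbad⟩ := Finset.mem_filter.1 hp
    by_cases hr : Reach G i m
    · rw [swapMap]
      simp only [if_pos hr]
      exact Finset.mem_filter.2 ⟨Finset.mem_univ _, hpos, hG, hcard, hrootj,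
        reach_of_reach_of_root hG.2.1 hrootj hr hjm⟩
    · have hni : ¬ IsRoot G i := fun h => hbad ⟨h, hr⟩
      have hex : ∃ u, (u, i) ∈ G := by
        simpa only [IsRoot, not_forall, not_not] using hni
      obtain ⟨s, G', heq, hposs, hG', hcardG, hrootG, htiG, hback, hw, htr⟩ :=
        swapMap_spec ε hpos hG hrootj hij hex hr
      rw [heq]
      refine Finset.mem_filter.2 ⟨Finset.mem_univ _, hposs, hG', hcardG ▸ hcard, hrootG,
        (htr m hjm hr).tail htiG⟩
  · rintro ⟨t, F⟩ hp
    obtain ⟨-, hpos, hF, hcard, hrootj, hji⟩ := Finset.mem_filter.1 hp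
    by_cases hr : Reach F i t
    · simp only [swapMap, if_pos hr]
    · obtain ⟨m, hm, hjm⟩ := exists_in_arc hji hij
      obtain ⟨s, G, heq, hposs, hG, hcardG, hrootG, htiG, hback, hw, htr⟩ :=
        swapMap_spec ε hpos hF hrootj hij ⟨m, hm⟩ hr
      rw [heq, hback]
  · rintro ⟨m, G⟩ hp
    obtain ⟨-, hpos, hG, hcard, hrootj, hjm, hbad⟩ := Finset.mem_filter.1 hp
    by_cases hr : Reach G i m
    · simp only [swapMap, if_pos hr]
    · have hni : ¬ IsRoot G i := fun h => hbad ⟨h, hr⟩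
      have hex : ∃ u, (u, i) ∈ G := by
        simpa only [IsRoot, not_forall, not_not] using hni
      obtain ⟨s, G', heq, hposs, hG', hcardG, hrootG, htiG, hback, hw, htr⟩ :=
        swapMap_spec ε hpos hG hrootj hij hex hr
      rw [heq, hback]
  · rintro ⟨t, F⟩ hp
    obtain ⟨-, hpos, hF, hcard, hrootj, hji⟩ := Finset.mem_filter.1 hp
    by_cases hr : Reach F i t
    · rw [swapMap]
      simp only [if_pos hr]
    · obtain ⟨m, hm, hjm⟩ := exists_in_arc hji hij
      obtain ⟨s, G, heq, hposs, hG, hcardG, hrootG, htiG, hback, hw, htr⟩ :=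
        swapMap_spec ε hpos hF hrootj hij ⟨m, hm⟩ hr
      rw [heq]
      exact hw.symm

theorem sumA (ε : Fin n → Fin n → ℝ) (k : ℕ) (i j : Fin n) (hij : i ≠ j) :
    SW ε (fun F => Forest ε F ∧ F.card = k + 1 ∧ IsRoot F j ∧ Reach F j i)
    = SWp ε i (fun p => 0 < ε p.1 i ∧ Forest ε p.2 ∧ p.2.card = k ∧ IsRoot p.2 j
        ∧ Reach p.2 j p.1 ∧ IsRoot p.2 i ∧ ¬ Reach p.2 i p.1) := by
  refine Eq.trans (sum_filter_eq_sum_filter (forestWeight ε)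
      (fun F => by simp only [Finset.mem_filter]))
    (Eq.trans (sumA_raw ε k i j hij) (sum_filter_eq_sum_filter _
      (fun p => by simp only [Finset.mem_filter])))

theorem sumC (ε : Fin n → Fin n → ℝ) (k : ℕ) (j : Fin n) :
    SW ε (fun F => Forest ε F ∧ F.card = k + 1 ∧ ¬ IsRoot F j)
    = SWp ε j (fun p => 0 < ε p.1 j ∧ Forest ε p.2 ∧ p.2.card = k ∧ IsRoot p.2 j
        ∧ ¬ Reach p.2 j p.1) := by
  refine Eq.trans (sum_filter_eq_sum_filter (forestWeight ε)
      (fun F => by simp only [Finset.mem_filter]))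
    (Eq.trans (sumC_raw ε k j) (sum_filter_eq_sum_filter _
      (fun p => by simp only [Finset.mem_filter])))

theorem sumB (ε : Fin n → Fin n → ℝ) (k : ℕ) (i j : Fin n) (hij : i ≠ j) :
    SWp ε i (fun p => 0 < ε p.1 i ∧ Forest ε p.2 ∧ p.2.card = k ∧ IsRoot p.2 j
        ∧ Reach p.2 j i)
    = SWp ε i (fun p => 0 < ε p.1 i ∧ Forest ε p.2 ∧ p.2.card = k ∧ IsRoot p.2 j
        ∧ Reach p.2 j p.1 ∧ ¬ (IsRoot p.2 i ∧ ¬ Reach p.2 i p.1)) := by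
  refine Eq.trans (sum_filter_eq_sum_filter _
      (fun p => by simp only [Finset.mem_filter]))
    (Eq.trans (sumB_raw ε k i j hij) (sum_filter_eq_sum_filter _
      (fun p => by simp only [Finset.mem_filter])))

theorem rec_step (ε : Fin n → Fin n → ℝ) (hnonneg : ∀ a b, 0 ≤ ε a b)
    (hdiag : ∀ v, ε v v = 0) (k : ℕ) :
    QMat ε (k+1) = sigmaW ε (k+1) • (1 : Matrix (Fin n) (Fin n) ℝ)
      + (-(kirchhoff ε)) * QMat ε k := by
  ext i j
  rw [Matrix.add_apply, Matrix.smul_apply, Matrix.one_apply, Matrix.mul_apply, smul_eq_mul]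
  have hker : ∀ m : Fin n, (-(kirchhoff ε)) i m
      = if i = m then -(∑ t ∈ Finset.univ.filter (· ≠ i), ε t i) else ε m i := by
    intro m
    simp only [Matrix.neg_apply, kirchhoff, Matrix.of_apply]
    split <;> ring
  have hsum : ∑ m, (-(kirchhoff ε)) i m * QMat ε k m j
      = -((∑ t ∈ Finset.univ.filter (· ≠ i), ε t i) * QMat ε k i j)
        + ∑ m ∈ Finset.univ.filter (· ≠ i), ε m i * QMat ε k m j := by
    rw [← Finset.add_sum_erase Finset.univ
      (fun m => (-(kirchhoff ε)) i m * QMat ε k m j) (Finset.mem_univ i)]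
    congr 1
    · rw [hker i, if_pos rfl]
      ring
    · rw [← Finset.filter_ne']
      apply Finset.sum_congr rfl
      intro m hm
      have hmi : m ≠ i := (Finset.mem_filter.1 hm).2
      rw [hker m, if_neg (Ne.symm hmi)]
  rw [hsum]
  have key : QMat ε (k+1) i j + (∑ t ∈ Finset.univ.filter (· ≠ i), ε t i) * QMat ε k i j
      = sigmaW ε (k+1) * (if i = j then 1 else 0)
        + ∑ m ∈ Finset.univ.filter (· ≠ i), ε m i * QMat ε k m j := by
    rcases eq_or_ne i j with rfl | hij
    · -- diagonal case
      rw [if_pos rfl, mul_one]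
      simp only [QMat_apply, sigmaW_eq]
      rw [Finset.sum_mul]
      have hc1 : ∑ t ∈ Finset.univ.filter (· ≠ i),
          ε t i * SW ε (fun F => Forest ε F ∧ F.card = k ∧ IsRoot F i ∧ Reach F i i)
          = SWp ε i (fun p => 0 < ε p.1 i ∧ Forest ε p.2 ∧ p.2.card = k
            ∧ IsRoot p.2 i ∧ Reach p.2 i i) :=
        col_collect ε hnonneg hdiag i
          (fun _ F => Forest ε F ∧ F.card = k ∧ IsRoot F i ∧ Reach F i i)
      have hc2 : ∑ m ∈ Finset.univ.filter (· ≠ i),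
          ε m i * SW ε (fun F => Forest ε F ∧ F.card = k ∧ IsRoot F i ∧ Reach F i m)
          = SWp ε i (fun p => 0 < ε p.1 i ∧ Forest ε p.2 ∧ p.2.card = k
            ∧ IsRoot p.2 i ∧ Reach p.2 i p.1) :=
        col_collect ε hnonneg hdiag i
          (fun m F => Forest ε F ∧ F.card = k ∧ IsRoot F i ∧ Reach F i m)
      rw [hc1, hc2]
      have e1 : SW ε (fun F => Forest ε F ∧ F.card = k + 1 ∧ IsRoot F i ∧ Reach F i i)
          = SW ε (fun F => (Forest ε F ∧ F.card = k + 1) ∧ IsRoot F i) :=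
        SW_congr ε (fun F => ⟨fun h => ⟨⟨h.1, h.2.1⟩, h.2.2.1⟩,
          fun h => ⟨h.1.1, h.1.2, h.2, reach_refl _ _⟩⟩)
      have e2 : SWp ε i (fun p => 0 < ε p.1 i ∧ Forest ε p.2 ∧ p.2.card = k
            ∧ IsRoot p.2 i ∧ Reach p.2 i i)
          = SWp ε i (fun p => 0 < ε p.1 i ∧ Forest ε p.2 ∧ p.2.card = k ∧ IsRoot p.2 i) :=
        SWp_congr ε i (fun p => ⟨fun h => ⟨h.1, h.2.1, h.2.2.1, h.2.2.2.1⟩,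
          fun h => ⟨h.1, h.2.1, h.2.2.1, h.2.2.2, reach_refl _ _⟩⟩)
      have e3 : SW ε (fun F => (Forest ε F ∧ F.card = k + 1) ∧ IsRoot F i)
            + SW ε (fun F => (Forest ε F ∧ F.card = k + 1) ∧ ¬ IsRoot F i)
          = SW ε (fun F => Forest ε F ∧ F.card = k + 1) :=
        SW_partition ε (fun F => Forest ε F ∧ F.card = k + 1) (fun F => IsRoot F i)
      have e4 : SW ε (fun F => (Forest ε F ∧ F.card = k + 1) ∧ ¬ IsRoot F i)
          = SW ε (fun F => Forest ε F ∧ F.card = k + 1 ∧ ¬ IsRoot F i) :=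
        SW_congr ε (fun F => by tauto)
      have e5 : SW ε (fun F => Forest ε F ∧ F.card = k + 1 ∧ ¬ IsRoot F i)
          = SWp ε i (fun p => 0 < ε p.1 i ∧ Forest ε p.2 ∧ p.2.card = k ∧ IsRoot p.2 i
              ∧ ¬ Reach p.2 i p.1) := sumC ε k i
      have e6 : SWp ε i (fun p => (0 < ε p.1 i ∧ Forest ε p.2 ∧ p.2.card = k
              ∧ IsRoot p.2 i) ∧ Reach p.2 i p.1)
            + SWp ε i (fun p => (0 < ε p.1 i ∧ Forest ε p.2 ∧ p.2.card = k
              ∧ IsRoot p.2 i) ∧ ¬ Reach p.2 i p.1)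
          = SWp ε i (fun p => 0 < ε p.1 i ∧ Forest ε p.2 ∧ p.2.card = k ∧ IsRoot p.2 i) :=
        SWp_partition ε i (fun p => 0 < ε p.1 i ∧ Forest ε p.2 ∧ p.2.card = k
          ∧ IsRoot p.2 i) (fun p => Reach p.2 i p.1)
      have e7 : SWp ε i (fun p => (0 < ε p.1 i ∧ Forest ε p.2 ∧ p.2.card = k
              ∧ IsRoot p.2 i) ∧ Reach p.2 i p.1)
          = SWp ε i (fun p => 0 < ε p.1 i ∧ Forest ε p.2 ∧ p.2.card = k
              ∧ IsRoot p.2 i ∧ Reach p.2 i p.1) :=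
        SWp_congr ε i (fun p => by tauto)
      have e8 : SWp ε i (fun p => (0 < ε p.1 i ∧ Forest ε p.2 ∧ p.2.card = k
              ∧ IsRoot p.2 i) ∧ ¬ Reach p.2 i p.1)
          = SWp ε i (fun p => 0 < ε p.1 i ∧ Forest ε p.2 ∧ p.2.card = k
              ∧ IsRoot p.2 i ∧ ¬ Reach p.2 i p.1) :=
        SWp_congr ε i (fun p => by tauto)
      linarith
    · -- off-diagonal case
      rw [if_neg hij, mul_zero, zero_add]
      simp only [QMat_apply]
      rw [Finset.sum_mul]
      have hc1 : ∑ t ∈ Finset.univ.filter (· ≠ i),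
          ε t i * SW ε (fun F => Forest ε F ∧ F.card = k ∧ IsRoot F j ∧ Reach F j i)
          = SWp ε i (fun p => 0 < ε p.1 i ∧ Forest ε p.2 ∧ p.2.card = k
            ∧ IsRoot p.2 j ∧ Reach p.2 j i) :=
        col_collect ε hnonneg hdiag i
          (fun _ F => Forest ε F ∧ F.card = k ∧ IsRoot F j ∧ Reach F j i)
      have hc2 : ∑ m ∈ Finset.univ.filter (· ≠ i),
          ε m i * SW ε (fun F => Forest ε F ∧ F.card = k ∧ IsRoot F j ∧ Reach F j m)
          = SWp ε i (fun p => 0 < ε p.1 i ∧ Forest ε p.2 ∧ p.2.card = k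
            ∧ IsRoot p.2 j ∧ Reach p.2 j p.1) :=
        col_collect ε hnonneg hdiag i
          (fun m F => Forest ε F ∧ F.card = k ∧ IsRoot F j ∧ Reach F j m)
      rw [hc1, hc2]
      rw [sumA ε k i j hij, sumB ε k i j hij]
      have e6 : SWp ε i (fun p => (0 < ε p.1 i ∧ Forest ε p.2 ∧ p.2.card = k
              ∧ IsRoot p.2 j ∧ Reach p.2 j p.1) ∧ (IsRoot p.2 i ∧ ¬ Reach p.2 i p.1))
            + SWp ε i (fun p => (0 < ε p.1 i ∧ Forest ε p.2 ∧ p.2.card = k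
              ∧ IsRoot p.2 j ∧ Reach p.2 j p.1) ∧ ¬ (IsRoot p.2 i ∧ ¬ Reach p.2 i p.1))
          = SWp ε i (fun p => 0 < ε p.1 i ∧ Forest ε p.2 ∧ p.2.card = k
              ∧ IsRoot p.2 j ∧ Reach p.2 j p.1) :=
        SWp_partition ε i (fun p => 0 < ε p.1 i ∧ Forest ε p.2 ∧ p.2.card = k
          ∧ IsRoot p.2 j ∧ Reach p.2 j p.1) (fun p => IsRoot p.2 i ∧ ¬ Reach p.2 i p.1)
      have e7 : SWp ε i (fun p => (0 < ε p.1 i ∧ Forest ε p.2 ∧ p.2.card = k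
              ∧ IsRoot p.2 j ∧ Reach p.2 j p.1) ∧ (IsRoot p.2 i ∧ ¬ Reach p.2 i p.1))
          = SWp ε i (fun p => 0 < ε p.1 i ∧ Forest ε p.2 ∧ p.2.card = k ∧ IsRoot p.2 j
              ∧ Reach p.2 j p.1 ∧ IsRoot p.2 i ∧ ¬ Reach p.2 i p.1) :=
        SWp_congr ε i (fun p => by tauto)
      have e8 : SWp ε i (fun p => (0 < ε p.1 i ∧ Forest ε p.2 ∧ p.2.card = k
              ∧ IsRoot p.2 j ∧ Reach p.2 j p.1) ∧ ¬ (IsRoot p.2 i ∧ ¬ Reach p.2 i p.1))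
          = SWp ε i (fun p => 0 < ε p.1 i ∧ Forest ε p.2 ∧ p.2.card = k ∧ IsRoot p.2 j
              ∧ Reach p.2 j p.1 ∧ ¬ (IsRoot p.2 i ∧ ¬ Reach p.2 i p.1)) :=
        SWp_congr ε i (fun p => by tauto)
      linarith
  linarith

theorem reach_empty {x y : Fin n} (h : Reach (∅ : Arcs n) x y) : x = y := by
  induction h with
  | refl => rfl
  | tail _ hbc _ => exact absurd hbc (Finset.notMem_empty _)

theorem forest_empty (ε : Fin n → Fin n → ℝ) : Forest ε (∅ : Arcs n) :=
  ⟨fun p hp => absurd hp (Finset.notMem_empty p),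
    fun u u' v hu _ => absurd hu (Finset.notMem_empty _),
    fun a b hab => absurd hab (Finset.notMem_empty _)⟩

theorem sigmaW_zero (ε : Fin n → Fin n → ℝ) : sigmaW ε 0 = 1 := by
  rw [sigmaW_eq]
  unfold SW
  refine Eq.trans (sum_filter_eq_sum_filter (forestWeight ε)
      (t := ({(∅ : Arcs n)} : Finset (Arcs n))) fun F => ?_) ?_
  · simp only [Finset.mem_filter, Finset.mem_univ, true_and, Finset.mem_singleton,
      Finset.card_eq_zero]
    constructor
    · exact fun h => h.2
    · rintro rfl
      exact ⟨forest_empty ε, rfl⟩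
  · rw [Finset.sum_singleton, forestWeight, Finset.prod_empty]

theorem QMat_zero (ε : Fin n → Fin n → ℝ) : QMat ε 0 = (1 : Matrix (Fin n) (Fin n) ℝ) := by
  ext i j
  rw [QMat_apply, Matrix.one_apply]
  unfold SW
  rcases eq_or_ne i j with rfl | hij
  · rw [if_pos rfl]
    refine Eq.trans (sum_filter_eq_sum_filter (forestWeight ε)
        (t := ({(∅ : Arcs n)} : Finset (Arcs n))) fun F => ?_) ?_
    · simp only [Finset.mem_filter, Finset.mem_univ, true_and, Finset.mem_singleton,
        Finset.card_eq_zero]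
      constructor
      · exact fun h => h.2.1
      · rintro rfl
        exact ⟨forest_empty ε, rfl, fun u => Finset.notMem_empty _, reach_refl _ _⟩
    · rw [Finset.sum_singleton, forestWeight, Finset.prod_empty]
  · rw [if_neg hij]
    refine Eq.trans (sum_filter_eq_sum_filter (forestWeight ε)
        (t := (∅ : Finset (Arcs n))) fun F => ?_) Finset.sum_empty
    simp only [Finset.mem_filter, Finset.mem_univ, true_and, Finset.notMem_empty,
      iff_false, not_and, Finset.card_eq_zero]
    rintro - rfl - hreach
    exact hij (reach_empty hreach).symm

end ForestAux

/-- `Q_k = Σ_{i=0}^{k} σ_{k−i}·(−L)^i` for `0 ≤ k ≤ n−v`. -/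
theorem QMat_polynomial_in_kirchhoff (n : ℕ) (hn : 1 < n) (ε : Fin n → Fin n → ℝ)
    (hnonneg : ∀ i j, 0 ≤ ε i j) (hdiag : ∀ i, ε i i = 0) :
    ∀ k : ℕ, k ≤ maxForestCard ε →
      QMat ε k = ∑ i ∈ Finset.range (k + 1), sigmaW ε (k - i) • (-(kirchhoff ε)) ^ i := by
  intro k hk
  clear hk
  induction k with
  | zero =>
    rw [Finset.sum_range_one, Nat.sub_zero, pow_zero, ForestAux.QMat_zero ε,
      ForestAux.sigmaW_zero ε, one_smul]
  | succ k ih =>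
    rw [ForestAux.rec_step ε (fun a b => hnonneg a b) hdiag k, ih,
      Finset.sum_range_succ' (fun i => sigmaW ε (k + 1 - i) • (-(kirchhoff ε)) ^ i) (k + 1),
      Finset.mul_sum,
      add_comm (sigmaW ε (k + 1) • (1 : Matrix (Fin n) (Fin n) ℝ))]
    congr 1
    · refine Finset.sum_congr rfl fun i _ => ?_
      rw [mul_smul_comm, ← pow_succ', Nat.succ_sub_succ]
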